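/- For every s > 0 and every t ∈ (0,1), one has g₀(t·s) > t · g₀(s). -/

import Mathlib

/-!
Write `a = s f₁(√γ)` and `b = |γ'| / 2`, so that the energy is `∫ √(a² + b²)`. Pointwise
Cauchy–Schwarz gives `√(t² a² + b²) ≥ t √(a² + b²) + (1 - t) b² / √(a² + b²)`, hence
`energy (t s) γ ≥ t energy s γ + (1 - t) D(γ)` with `D(γ) = ∫ b² / √(a² + b²)`.
If `D(γ) ≥ ε` this gives the gap `(1 - t) ε`. Otherwise the total variation of `γ` is small, so
`γ ≤ η` everywhere and `energy (t s) γ ≥ t s f₁(√η)`. This beats `t g₀(s)` for small `η`, since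
testing with a small bump `4 r² x (1 - x)` and using `f₁(u) ≤ ℓ - ℓ₁ u / 2` near `0` shows
`g₀(s) < s ℓ = s f₁(0)`.
-/

open MeasureTheory Set Filter

/-- Hypotheses on the function `f₁` from Section 6.1 of the paper. -/
structure F1Hyp (ℓ ℓ₁ : ℝ) (f₁ : ℝ → ℝ) : Prop where
  hl : 0 < ℓ
  hl1 : 0 < ℓ₁
  cont : ContinuousOn f₁ (Icc 0 1)
  diff : ∃ d : ℝ → ℝ, ContinuousOn d (Ioc 0 1) ∧
    ∀ t ∈ Ioc (0:ℝ) 1, HasDerivWithinAt f₁ (d t) (Ioc 0 1) t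
  anti : StrictAntiOn f₁ (Icc 0 1)
  nonneg : ∀ t ∈ Icc (0:ℝ) 1, 0 ≤ f₁ t
  f10 : f₁ 0 = ℓ
  f11 : f₁ 1 = 0
  convexSqrt : ConvexOn ℝ (Icc 0 1) (fun u => f₁ (Real.sqrt u))
  lim0 : Tendsto (fun s => (f₁ s - ℓ + ℓ₁ * s) / s) (nhdsWithin 0 (Ioi 0)) (nhds 0)

/-- `γ` is admissible, with a.e. derivative `γ'` (absolute continuity is encoded by the
fundamental theorem of calculus representation with an `L¹` derivative). -/
def Admissible (γ γ' : ℝ → ℝ) : Prop :=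
  IntegrableOn γ' (Icc 0 1) ∧
  (∀ t ∈ Icc (0:ℝ) 1, γ t = ∫ u in (0:ℝ)..t, γ' u) ∧
  (∀ t ∈ Icc (0:ℝ) 1, 0 ≤ γ t ∧ γ t ≤ 1) ∧
  γ 0 = 0 ∧ γ 1 = 0

/-- The energy in the characterization (6.11). -/
noncomputable def energy (f₁ : ℝ → ℝ) (s : ℝ) (γ γ' : ℝ → ℝ) : ℝ :=
  ∫ t in (0:ℝ)..1, Real.sqrt (s ^ 2 * (f₁ (Real.sqrt (γ t))) ^ 2 + (γ' t) ^ 2 / 4)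

/-- The cohesive energy density of pristine material, via characterization (6.11). -/
noncomputable def g0 (f₁ : ℝ → ℝ) (s : ℝ) : ℝ :=
  sInf {x | ∃ γ γ' : ℝ → ℝ, Admissible γ γ' ∧ x = energy f₁ s γ γ'}

open Real Topology intervalIntegral

lemma sqrt_sq_add_sq_le_abs_add_abs (a b : ℝ) : √(a ^ 2 + b ^ 2) ≤ |a| + |b| :=
  (sqrt_le_left (by positivity)).2 (by nlinarith [abs_nonneg a, abs_nonneg b, sq_abs a, sq_abs b])

/-- Cauchy–Schwarz in disguise: after clearing `√(a² + b²)` it reads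
`(t a² + b²)² ≤ (t² a² + b²)(a² + b²)`. -/
lemma mul_sqrt_add_one_sub_mul_div_sqrt_le (t a b : ℝ) :
    t * √(a ^ 2 + b ^ 2) + (1 - t) * (b ^ 2 / √(a ^ 2 + b ^ 2)) ≤ √((t * a) ^ 2 + b ^ 2) := by
  rcases (sqrt_nonneg (a ^ 2 + b ^ 2)).eq_or_lt with h | h
  · rw [← h]
    simp only [mul_zero, div_zero, add_zero]
    positivity
  · have hsum : t * √(a ^ 2 + b ^ 2) + (1 - t) * (b ^ 2 / √(a ^ 2 + b ^ 2))
        = (t * a ^ 2 + b ^ 2) / √(a ^ 2 + b ^ 2) := by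
      field_simp
      rw [sq_sqrt (by positivity)]
      ring
    rw [hsum, div_le_iff₀ h, ← sqrt_mul (by positivity)]
    exact le_sqrt_of_sq_le (by nlinarith [sq_nonneg (a * b * (1 - t))])

lemma le_add_mul_sq_div_sqrt {a b c β : ℝ} (hb : 0 ≤ b) (ha : |a| ≤ c) (hβ : 0 < β) :
    b ≤ β + (1 + c / β) * (b ^ 2 / √(a ^ 2 + b ^ 2)) := by
  have hc : 0 ≤ c := (abs_nonneg a).trans ha
  rcases le_or_gt b β with hbβ | hbβ
  · have : 0 ≤ (1 + c / β) * (b ^ 2 / √(a ^ 2 + b ^ 2)) := by positivity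
    linarith
  · have hA : √(a ^ 2 + b ^ 2) ≤ c + b := by
      have := sqrt_sq_add_sq_le_abs_add_abs a b
      rw [abs_of_nonneg hb] at this
      linarith
    have hA0 : 0 < √(a ^ 2 + b ^ 2) := sqrt_pos.2 (by nlinarith)
    have hcb : c ≤ c / β * b := by
      rw [div_mul_eq_mul_div, le_div_iff₀ hβ]
      nlinarith
    have : b ≤ (1 + c / β) * (b ^ 2 / √(a ^ 2 + b ^ 2)) := by
      rw [mul_div_assoc', le_div_iff₀ hA0]
      nlinarith [mul_le_mul_of_nonneg_left hA hb]
    linarith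

lemma sq_div_sqrt_sq_add_sq_le (a : ℝ) {b : ℝ} (hb : 0 ≤ b) : b ^ 2 / √(a ^ 2 + b ^ 2) ≤ b :=
  div_le_of_le_mul₀ (sqrt_nonneg _) hb <| by
    have := le_sqrt_of_sq_le (le_add_of_nonneg_left (sq_nonneg a) : b ^ 2 ≤ a ^ 2 + b ^ 2)
    nlinarith

lemma integral_mul_one_sub : ∫ x in (0 : ℝ)..1, x * (1 - x) = 1 / 6 := by
  simp [mul_sub, ← pow_two, integral_pow]
  norm_num

namespace Admissible

variable {γ γ' : ℝ → ℝ}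

lemma zero : Admissible (fun _ => 0) (fun _ => 0) :=
  ⟨integrableOn_const measure_Icc_lt_top.ne, fun _ _ => by simp, by simp, rfl, rfl⟩

lemma sqrt_mem_Icc (h : Admissible γ γ') {x : ℝ} (hx : x ∈ Icc 0 1) : √(γ x) ∈ Icc 0 1 :=
  ⟨sqrt_nonneg _, sqrt_le_one.2 (h.2.2.1 x hx).2⟩

lemma continuousOn (h : Admissible γ γ') : ContinuousOn γ (Icc 0 1) := by
  have hprim : ContinuousOn (fun x => ∫ u in (0 : ℝ)..x, γ' u) (uIcc 0 1) :=
    continuousOn_primitive_interval (by rw [uIcc_of_le zero_le_one]; exact h.1)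
  rw [uIcc_of_le zero_le_one] at hprim
  exact hprim.congr h.2.1

lemma continuousOn_comp_sqrt {f₁ : ℝ → ℝ} (h : Admissible γ γ') (hf : ContinuousOn f₁ (Icc 0 1)) :
    ContinuousOn (fun x => f₁ √(γ x)) (Icc 0 1) :=
  hf.comp (continuous_sqrt.comp_continuousOn h.continuousOn) fun _ hx => h.sqrt_mem_Icc hx

lemma intervalIntegrable (h : Admissible γ γ') {a b : ℝ} (ha : 0 ≤ a) (hab : a ≤ b)
    (hb : b ≤ 1) : IntervalIntegrable γ' volume a b :=
  (intervalIntegrable_iff_integrableOn_Icc_of_le hab).2 (h.1.mono_set (Icc_subset_Icc ha hb))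

/-- The path climbs to `γ x` and comes back down to `γ 1 = 0`. -/
lemma le_integral_abs_div_two (h : Admissible γ γ') {x : ℝ} (hx : x ∈ Icc 0 1) :
    γ x ≤ ∫ u in (0 : ℝ)..1, |γ' u| / 2 := by
  have h0x := h.intervalIntegrable le_rfl hx.1 hx.2
  have hx1 := h.intervalIntegrable hx.1 hx.2 le_rfl
  have hup : γ x ≤ ∫ u in (0 : ℝ)..x, |γ' u| :=
    h.2.1 x hx ▸ (le_abs_self _).trans (abs_integral_le_integral_abs hx.1)
  have hdown : γ x ≤ ∫ u in x..1, |γ' u| := by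
    have hγ1 : (∫ u in (0 : ℝ)..x, γ' u) + ∫ u in x..1, γ' u = 0 := by
      rw [integral_add_adjacent_intervals h0x hx1, ← h.2.1 1 ⟨zero_le_one, le_rfl⟩, h.2.2.2.2]
    rw [h.2.1 x hx, eq_neg_of_add_eq_zero_left hγ1]
    exact (neg_le_abs _).trans (abs_integral_le_integral_abs hx.2)
  rw [intervalIntegral.integral_div, ← integral_add_adjacent_intervals h0x.abs hx1.abs]
  linarith

end Admissible

noncomputable def energyDensity (f₁ : ℝ → ℝ) (s : ℝ) (γ γ' : ℝ → ℝ) (x : ℝ) : ℝ :=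
  √((s * f₁ √(γ x)) ^ 2 + (|γ' x| / 2) ^ 2)

/-- The share of the energy carried by the derivative of the path:
`energy = ∫ a² / √(a² + b²) + gradientEnergy`. -/
noncomputable def gradientEnergy (f₁ : ℝ → ℝ) (s : ℝ) (γ γ' : ℝ → ℝ) : ℝ :=
  ∫ x in (0 : ℝ)..1, (|γ' x| / 2) ^ 2 / energyDensity f₁ s γ γ' x

section Energy

variable {f₁ : ℝ → ℝ} {γ γ' : ℝ → ℝ}

lemma energy_eq_integral_energyDensity {s : ℝ} :
    energy f₁ s γ γ' = ∫ x in (0 : ℝ)..1, energyDensity f₁ s γ γ' x := by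
  simp only [energy, energyDensity, mul_pow, div_pow, sq_abs]
  norm_num

lemma g0_le_energy {s : ℝ} (h : Admissible γ γ') : g0 f₁ s ≤ energy f₁ s γ γ' :=
  csInf_le ⟨0, by
    rintro _ ⟨γ, γ', _, rfl⟩
    exact integral_nonneg zero_le_one fun _ _ => sqrt_nonneg _⟩ ⟨γ, γ', h, rfl⟩

lemma le_g0 {s c : ℝ} (h : ∀ γ γ', Admissible γ γ' → c ≤ energy f₁ s γ γ') : c ≤ g0 f₁ s :=
  le_csInf ⟨_, _, _, Admissible.zero, rfl⟩ fun _ ⟨γ, γ', hγ, hx⟩ => hx ▸ h γ γ' hγ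

variable (hf : ContinuousOn f₁ (Icc 0 1)) (h : Admissible γ γ')
include hf h

lemma Admissible.aemeasurable_energyDensity (s : ℝ) :
    AEMeasurable (energyDensity f₁ s γ γ') (volume.restrict (Icc 0 1)) :=
  have hF := ((h.continuousOn_comp_sqrt hf).aestronglyMeasurable measurableSet_Icc).aemeasurable
  have hγ' := h.1.aestronglyMeasurable.aemeasurable
  (((hF.const_mul s).pow_const 2).add ((hγ'.abs.div_const 2).pow_const 2)).sqrt

lemma Admissible.intervalIntegrable_energyDensity (s : ℝ) :
    IntervalIntegrable (energyDensity f₁ s γ γ') volume 0 1 := by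
  obtain ⟨M, hM⟩ := isCompact_Icc.exists_bound_of_continuousOn (h.continuousOn_comp_sqrt hf)
  rw [intervalIntegrable_iff_integrableOn_Icc_of_le zero_le_one]
  refine Integrable.mono' ((integrable_const (|s| * M)).add (h.1.abs.div_const 2))
    (h.aemeasurable_energyDensity hf s).aestronglyMeasurable ?_
  filter_upwards [ae_restrict_mem measurableSet_Icc] with x hx
  rw [energyDensity, norm_of_nonneg (sqrt_nonneg _)]
  refine (sqrt_sq_add_sq_le_abs_add_abs _ _).trans ?_
  rw [abs_mul, abs_div, abs_abs, abs_two]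
  show _ ≤ |s| * M + |γ' x| / 2
  gcongr
  exact hM x hx

lemma Admissible.intervalIntegrable_gradientDensity (s : ℝ) :
    IntervalIntegrable (fun x => (|γ' x| / 2) ^ 2 / energyDensity f₁ s γ γ' x) volume 0 1 := by
  rw [intervalIntegrable_iff_integrableOn_Icc_of_le zero_le_one]
  refine Integrable.mono' (h.1.abs.div_const 2) ?_ (ae_of_all _ fun x => ?_)
  · exact (((h.1.aestronglyMeasurable.aemeasurable.abs.div_const 2).pow_const 2).div
      (h.aemeasurable_energyDensity hf s)).aestronglyMeasurable
  · rw [norm_of_nonneg (by unfold energyDensity; positivity)]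
    exact sq_div_sqrt_sq_add_sq_le _ (by positivity)

lemma mul_energy_add_gradientEnergy_le (s t : ℝ) :
    t * energy f₁ s γ γ' + (1 - t) * gradientEnergy f₁ s γ γ' ≤ energy f₁ (t * s) γ γ' := by
  have hE := (h.intervalIntegrable_energyDensity hf s).const_mul t
  have hG := (h.intervalIntegrable_gradientDensity hf s).const_mul (1 - t)
  rw [energy_eq_integral_energyDensity, energy_eq_integral_energyDensity, gradientEnergy,
    ← intervalIntegral.integral_const_mul, ← intervalIntegral.integral_const_mul,
    ← integral_add hE hG]
  refine integral_mono_on zero_le_one (hE.add hG)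
    (h.intervalIntegrable_energyDensity hf (t * s)) fun x _ => ?_
  simp only [energyDensity, mul_assoc t s]
  exact mul_sqrt_add_one_sub_mul_div_sqrt_le t _ _

lemma integral_abs_div_two_le {s M β : ℝ} (hM : ∀ u ∈ Icc (0 : ℝ) 1, |f₁ u| ≤ M) (hβ : 0 < β) :
    ∫ x in (0 : ℝ)..1, |γ' x| / 2 ≤ β + (1 + |s| * M / β) * gradientEnergy f₁ s γ γ' := by
  rw [gradientEnergy, ← intervalIntegral.integral_const_mul]
  have hrhs := (h.intervalIntegrable_gradientDensity hf s).const_mul (1 + |s| * M / β)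
  calc ∫ x in (0 : ℝ)..1, |γ' x| / 2
      ≤ ∫ x in (0 : ℝ)..1, (β + (1 + |s| * M / β) *
          ((|γ' x| / 2) ^ 2 / energyDensity f₁ s γ γ' x)) :=
        integral_mono_on zero_le_one
          ((h.intervalIntegrable le_rfl zero_le_one le_rfl).abs.div_const 2)
          (intervalIntegrable_const.add hrhs) fun x hx => by
          rw [energyDensity]
          refine le_add_mul_sq_div_sqrt (by positivity) ?_ hβ
          rw [abs_mul]
          exact mul_le_mul_of_nonneg_left (hM _ (h.sqrt_mem_Icc hx)) (abs_nonneg s)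
    _ = β + ∫ x in (0 : ℝ)..1, (1 + |s| * M / β) *
          ((|γ' x| / 2) ^ 2 / energyDensity f₁ s γ γ' x) := by
        rw [integral_add intervalIntegrable_const hrhs]
        simp

lemma mul_apply_sqrt_le_energy {s : ℝ} (hanti : AntitoneOn f₁ (Icc 0 1)) (hs : 0 ≤ s) {η : ℝ}
    (hη : η ≤ 1) (hγη : ∀ x ∈ Icc (0 : ℝ) 1, γ x ≤ η) : s * f₁ √η ≤ energy f₁ s γ γ' := by
  rw [energy_eq_integral_energyDensity]
  calc s * f₁ √η = ∫ _ in (0 : ℝ)..1, s * f₁ √η := by simp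
    _ ≤ _ := integral_mono_on zero_le_one intervalIntegrable_const
        (h.intervalIntegrable_energyDensity hf s) fun x hx => ?_
  calc s * f₁ √η ≤ s * f₁ √(γ x) := mul_le_mul_of_nonneg_left
        (hanti (h.sqrt_mem_Icc hx) ⟨sqrt_nonneg _, sqrt_le_one.2 hη⟩
          (sqrt_le_sqrt (hγη x hx))) hs
    _ ≤ |s * f₁ √(γ x)| := le_abs_self _
    _ ≤ energyDensity f₁ s γ γ' x := abs_le_sqrt (le_add_of_nonneg_right (sq_nonneg _))

end Energy

lemma exists_forall_le_of_gradientEnergy_lt {f₁ : ℝ → ℝ} (hf : ContinuousOn f₁ (Icc 0 1))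
    (s : ℝ) {η : ℝ} (hη : 0 < η) :
    ∃ ε > 0, ∀ γ γ', Admissible γ γ' → gradientEnergy f₁ s γ γ' < ε →
      ∀ x ∈ Icc (0 : ℝ) 1, γ x ≤ η := by
  obtain ⟨M, hM⟩ := isCompact_Icc.exists_bound_of_continuousOn hf
  have hM0 : 0 ≤ M := (norm_nonneg _).trans (hM 0 ⟨le_rfl, zero_le_one⟩)
  set C := 1 + |s| * M / (η / 2)
  have hC : 0 < C := by positivity
  refine ⟨η / 2 / C, by positivity, fun γ γ' h hsmall x hx => ?_⟩
  have hvar : ∫ x in (0 : ℝ)..1, |γ' x| / 2 ≤ η / 2 + C * gradientEnergy f₁ s γ γ' :=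
    integral_abs_div_two_le hf h hM (half_pos hη)
  have : C * gradientEnergy f₁ s γ γ' < η / 2 := by
    rwa [lt_div_iff₀ hC, mul_comm] at hsmall
  linarith [h.le_integral_abs_div_two hx]

lemma exists_lt_mul_apply_sqrt {f₁ : ℝ → ℝ} (hf : ContinuousOn f₁ (Icc 0 1)) {g s : ℝ}
    (hg : g < s * f₁ 0) : ∃ η ∈ Ioc (0 : ℝ) 1, g < s * f₁ √η := by
  have hcont : ContinuousWithinAt (fun η => s * f₁ √η) (Icc 0 1) 0 :=
    continuousWithinAt_const.mul ((hf.comp continuous_sqrt.continuousOn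
      fun _ hu => ⟨sqrt_nonneg _, sqrt_le_one.2 hu.2⟩) 0 ⟨le_rfl, zero_le_one⟩)
  have hlim : Tendsto (fun η => s * f₁ √η) (𝓝[>] 0) (𝓝 (s * f₁ 0)) := by
    simpa using hcont.tendsto.mono_left (nhdsWithin_le_of_mem (Icc_mem_nhdsGT zero_lt_one))
  obtain ⟨η, hgη, hη⟩ :=
    ((hlim.eventually (lt_mem_nhds hg)).and (Ioc_mem_nhdsGT zero_lt_one)).exists
  exact ⟨η, hη, hgη⟩

lemma admissible_bump {r : ℝ} (hr : r ^ 2 ≤ 1) :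
    Admissible (fun x => 4 * r ^ 2 * (x * (1 - x))) (fun x => 4 * r ^ 2 * (1 - 2 * x)) := by
  refine ⟨Continuous.integrableOn_Icc (by fun_prop), fun x _ => ?_, fun x hx => ⟨?_, ?_⟩,
    by simp, by simp⟩
  · have hderiv (y : ℝ) :
        HasDerivAt (fun x => 4 * r ^ 2 * (x * (1 - x))) (4 * r ^ 2 * (1 - 2 * y)) y :=
      (((hasDerivAt_id' y).fun_mul ((hasDerivAt_id' y).const_sub 1)).const_mul _).congr_deriv
        (by ring)
    rw [intervalIntegral.integral_eq_sub_of_hasDerivAt (fun y _ => hderiv y)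
      (Continuous.intervalIntegrable (by fun_prop) _ _)]
    simp
  · have := hx.1; have := hx.2; positivity
  · nlinarith [sq_nonneg (2 * x - 1), sq_nonneg r]

namespace F1Hyp

variable {ℓ ℓ₁ : ℝ} {f₁ : ℝ → ℝ}

lemma mapsTo (hf : F1Hyp ℓ ℓ₁ f₁) : MapsTo f₁ (Icc 0 1) (Icc 0 ℓ) := fun u hu =>
  ⟨hf.nonneg u hu, hf.f10 ▸ hf.anti.antitoneOn ⟨le_rfl, zero_le_one⟩ hu hu.1⟩

lemma exists_le_sub_mul (hf : F1Hyp ℓ ℓ₁ f₁) :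
    ∃ δ ∈ Ioc (0 : ℝ) 1, ∀ u ∈ Icc 0 δ, f₁ u ≤ ℓ - ℓ₁ / 2 * u := by
  have hev : ∀ᶠ u in 𝓝[>] 0, (f₁ u - ℓ + ℓ₁ * u) / u < ℓ₁ / 2 :=
    hf.lim0.eventually (gt_mem_nhds (half_pos hf.hl1))
  obtain ⟨δ, hδ, hsub⟩ := mem_nhdsGT_iff_exists_Ioc_subset.1 hev
  refine ⟨min δ 1, ⟨lt_min hδ zero_lt_one, min_le_right _ _⟩, fun u ⟨hu0, huδ⟩ => ?_⟩
  rcases hu0.eq_or_lt with rfl | hu0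
  · simp [hf.f10]
  · have : (f₁ u - ℓ + ℓ₁ * u) / u < ℓ₁ / 2 := hsub ⟨hu0, huδ.trans (min_le_left _ _)⟩
    rw [div_lt_iff₀ hu0] at this
    linarith

lemma energyDensity_bump_le (hf : F1Hyp ℓ ℓ₁ f₁) {s δ r x : ℝ} (hs : 0 ≤ s)
    (hδ : ∀ u ∈ Icc 0 δ, f₁ u ≤ ℓ - ℓ₁ / 2 * u) (hr0 : 0 < r) (hrδ : r ≤ δ) (hr1 : r ≤ 1)
    (hx : x ∈ Icc (0 : ℝ) 1) :
    energyDensity f₁ s (fun x => 4 * r ^ 2 * (x * (1 - x))) (fun x => 4 * r ^ 2 * (1 - 2 * x)) x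
      ≤ s * ℓ + 2 * r ^ 2 - 2 * s * ℓ₁ * r * (x * (1 - x)) := by
  set p := x * (1 - x)
  have hp0 : 0 ≤ p := mul_nonneg hx.1 (by linarith [hx.2])
  have hp : p ≤ 1 / 4 := by nlinarith [sq_nonneg (2 * x - 1)]
  set u := √(4 * r ^ 2 * p)
  have hu0 : 0 ≤ u := sqrt_nonneg _
  have hur : u ≤ r := (sqrt_le_left hr0.le).2 (by nlinarith)
  have hu : 4 * r * p ≤ u := by
    have hu2 : u ^ 2 = 4 * r ^ 2 * p := sq_sqrt (by positivity)
    exact le_of_mul_le_mul_left (by nlinarith) hr0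
  have hF0 : 0 ≤ f₁ u := (hf.mapsTo ⟨hu0, hur.trans hr1⟩).1
  have hF : f₁ u ≤ ℓ - 2 * ℓ₁ * r * p := by
    nlinarith [hδ u ⟨hu0, hur.trans hrδ⟩, hf.hl1]
  have hb : |4 * r ^ 2 * (1 - 2 * x)| / 2 ≤ 2 * r ^ 2 := by
    rw [abs_mul, abs_of_nonneg (by positivity : (0 : ℝ) ≤ 4 * r ^ 2)]
    have : |1 - 2 * x| ≤ 1 := abs_le.2 ⟨by linarith [hx.2], by linarith [hx.1]⟩
    nlinarith [sq_nonneg r]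
  calc _ ≤ |s * f₁ u| + |(|4 * r ^ 2 * (1 - 2 * x)| / 2)| := sqrt_sq_add_sq_le_abs_add_abs _ _
    _ = s * f₁ u + |4 * r ^ 2 * (1 - 2 * x)| / 2 := by
      rw [abs_of_nonneg (mul_nonneg hs hF0), abs_of_nonneg (by positivity)]
    _ ≤ s * (ℓ - 2 * ℓ₁ * r * p) + 2 * r ^ 2 := by gcongr
    _ = _ := by ring

lemma g0_lt_mul (hf : F1Hyp ℓ ℓ₁ f₁) {s : ℝ} (hs : 0 < s) : g0 f₁ s < s * ℓ := by
  obtain ⟨δ, ⟨hδ0, hδ1⟩, hδ⟩ := hf.exists_le_sub_mul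
  have hsℓ₁ : 0 < s * ℓ₁ := mul_pos hs hf.hl1
  set r := min δ (s * ℓ₁ / 12)
  have hr0 : 0 < r := lt_min hδ0 (by positivity)
  have hrδ : r ≤ δ := min_le_left _ _
  have hr : r ≤ s * ℓ₁ / 12 := min_le_right _ _
  have hbump := admissible_bump (r := r) (by nlinarith)
  calc g0 f₁ s ≤ energy f₁ s _ _ := g0_le_energy hbump
    _ ≤ ∫ x in (0 : ℝ)..1, (s * ℓ + 2 * r ^ 2 - 2 * s * ℓ₁ * r * (x * (1 - x))) := by
      rw [energy_eq_integral_energyDensity]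
      exact integral_mono_on zero_le_one
        (hbump.intervalIntegrable_energyDensity hf.cont s)
        (Continuous.intervalIntegrable (by fun_prop) _ _)
        fun x hx => hf.energyDensity_bump_le hs.le hδ hr0 hrδ (hrδ.trans hδ1) hx
    _ = s * ℓ + 2 * r ^ 2 - s * ℓ₁ * r / 3 := by
      rw [intervalIntegral.integral_sub intervalIntegrable_const
        (Continuous.intervalIntegrable (by fun_prop) _ _), intervalIntegral.integral_const_mul,
        integral_mul_one_sub]
      simp
      ring
    _ < s * ℓ := by nlinarith

end F1Hyp

/-- for every `s > 0` and `t ∈ (0,1)`, `g₀(t s) > t g₀(s)`. -/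
theorem stmt_2 (ℓ ℓ₁ : ℝ) (f₁ : ℝ → ℝ) (hf : F1Hyp ℓ ℓ₁ f₁)
    (s t : ℝ) (hs : 0 < s) (ht : t ∈ Ioo (0:ℝ) 1) :
    t * g0 f₁ s < g0 f₁ (t * s) := by
  obtain ⟨ht0, ht1⟩ := ht
  obtain ⟨η, ⟨hη0, hη1⟩, hgη⟩ :=
    exists_lt_mul_apply_sqrt hf.cont (hf.f10 ▸ hf.g0_lt_mul hs)
  obtain ⟨ε, hε, hsmall⟩ := exists_forall_le_of_gradientEnergy_lt hf.cont s hη0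
  have hgap : t * g0 f₁ s < min (t * g0 f₁ s + (1 - t) * ε) (t * s * f₁ √η) :=
    lt_min (by nlinarith) (by rw [mul_assoc]; exact mul_lt_mul_of_pos_left hgη ht0)
  refine hgap.trans_le (le_g0 fun γ γ' hγ => ?_)
  rcases le_or_gt ε (gradientEnergy f₁ s γ γ') with hD | hD
  · have hsplit := mul_energy_add_gradientEnergy_le hf.cont hγ s t
    have hg := g0_le_energy (f₁ := f₁) (s := s) hγ
    exact min_le_of_left_le (by nlinarith)
  · exact min_le_of_right_le <| mul_apply_sqrt_le_energy hf.cont hγ hf.anti.antitoneOn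
      (by positivity) hη1 (hsmall γ γ' hγ hD)
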